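/- arXiv:2205.05418 — 2 statements merged into one kernel-verified Lean document; each statement's English description precedes it below -/
import Mathlib

section
/- Let p be an odd prime, α a positive integer, and a an integer. Then |S(p^α; a, 0)| ≤ p^{α/2} · gcd(p^α, a)^{1/2}. -/
open scoped Classical
open Complex

noncomputable section

/-- `e(t) = exp(2πit)`. -/
def eC (t : ℂ) : ℂ := Complex.exp (2 * Real.pi * Complex.I * t)

/-- Number of triples `1 ≤ x,y,z ≤ q` with `x²+y²+z²+k ≡ 0 (mod q)`. -/
def lamCount (q : ℕ) (k : ℤ) : ℕ :=
  ((Finset.Icc 1 q ×ˢ Finset.Icc 1 q ×ˢ Finset.Icc 1 q).filter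
    (fun t => (q : ℤ) ∣ ((t.1 : ℤ) ^ 2 + (t.2.1 : ℤ) ^ 2 + (t.2.2 : ℤ) ^ 2 + k))).card

/-- `λ(q; n, m, l, k)`. -/
def lamExp (q : ℕ) (n m l k : ℤ) : ℂ :=
  ∑ t ∈ (Finset.Icc 1 q ×ˢ Finset.Icc 1 q ×ˢ Finset.Icc 1 q).filter
      (fun t => (q : ℤ) ∣ ((t.1 : ℤ) ^ 2 + (t.2.1 : ℤ) ^ 2 + (t.2.2 : ℤ) ^ 2 + k)),
    eC (((n * t.1 + m * t.2.1 + l * t.2.2 : ℤ) : ℂ) / (q : ℂ))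

/-- An integer is `r`-free if it is nonzero and divisible by no `r`-th power of a prime. -/
def IsRFree (r : ℕ) (n : ℤ) : Prop := n ≠ 0 ∧ ∀ p : ℕ, p.Prime → ¬ ((p : ℤ) ^ r ∣ n)

/-- `R(H, r, k)`: number of triples `1 ≤ x,y,z ≤ H` with `x²+y²+z²+k` being `r`-free. -/
def Rcount (H r : ℕ) (k : ℤ) : ℕ :=
  ((Finset.Icc 1 H ×ˢ Finset.Icc 1 H ×ˢ Finset.Icc 1 H).filter
    (fun t => IsRFree r ((t.1 : ℤ) ^ 2 + (t.2.1 : ℤ) ^ 2 + (t.2.2 : ℤ) ^ 2 + k))).card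

/-- `S₃(H, k)`: number of triples `1 ≤ x,y,z ≤ H` with `x²+y²+z²+k` squarefree. -/
def S3count (H : ℕ) (k : ℤ) : ℕ :=
  ((Finset.Icc 1 H ×ˢ Finset.Icc 1 H ×ˢ Finset.Icc 1 H).filter
    (fun t => Squarefree ((t.1 : ℤ) ^ 2 + (t.2.1 : ℤ) ^ 2 + (t.2.2 : ℤ) ^ 2 + k))).card

/-- `D(H, q, k)`: number of triples `1 ≤ x,y,z ≤ H` with `x²+y²+z²+k ≡ 0 (mod q)`. -/
def Dcount (H q : ℕ) (k : ℤ) : ℕ :=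
  ((Finset.Icc 1 H ×ˢ Finset.Icc 1 H ×ˢ Finset.Icc 1 H).filter
    (fun t => (q : ℤ) ∣ ((t.1 : ℤ) ^ 2 + (t.2.1 : ℤ) ^ 2 + (t.2.2 : ℤ) ^ 2 + k))).card

/-- `N₁(H, q, k)`. -/
def N1 (H q : ℕ) (k : ℤ) : ℂ :=
  (q : ℂ)⁻¹ * ∑ t ∈ Finset.Icc 1 (q - 1),
    lamExp q (-(t : ℤ)) 0 0 k * ∑ h ∈ Finset.Icc 1 H, eC (((h * t : ℕ) : ℂ) / (q : ℂ))

/-- `N₂(H, q, k)`. -/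
def N2 (H q : ℕ) (k : ℤ) : ℂ :=
  ((q : ℂ) ^ 2)⁻¹ * ∑ t ∈ Finset.Icc 1 (q - 1) ×ˢ Finset.Icc 1 (q - 1),
    lamExp q (-(t.1 : ℤ)) (-(t.2 : ℤ)) 0 k *
      ((∑ h ∈ Finset.Icc 1 H, eC (((h * t.1 : ℕ) : ℂ) / (q : ℂ))) *
       (∑ h ∈ Finset.Icc 1 H, eC (((h * t.2 : ℕ) : ℂ) / (q : ℂ))))

/-- `N₃(H, q, k)`. -/
def N3 (H q : ℕ) (k : ℤ) : ℂ :=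
  ((q : ℂ) ^ 3)⁻¹ * ∑ t ∈ Finset.Icc 1 (q - 1) ×ˢ Finset.Icc 1 (q - 1) ×ˢ Finset.Icc 1 (q - 1),
    lamExp q (-(t.1 : ℤ)) (-(t.2.1 : ℤ)) (-(t.2.2 : ℤ)) k *
      ((∑ h ∈ Finset.Icc 1 H, eC (((h * t.1 : ℕ) : ℂ) / (q : ℂ))) *
       (∑ h ∈ Finset.Icc 1 H, eC (((h * t.2.1 : ℕ) : ℂ) / (q : ℂ))) *
       (∑ h ∈ Finset.Icc 1 H, eC (((h * t.2.2 : ℕ) : ℂ) / (q : ℂ))))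

/-- The Gauss sum `G(q; n)`. -/
def gaussQ (q : ℕ) (n : ℤ) : ℂ :=
  ∑ x ∈ Finset.Icc 1 q, eC (((n * (x : ℤ) ^ 2 : ℤ) : ℂ) / (q : ℂ))

/-- Multiplicative inverse of `x` modulo `c`, as a natural number. -/
def invMod (c x : ℕ) : ℕ := ((x : ZMod c)⁻¹).val

/-- The Salié sum `S(c; a, b)`. -/
def salieSum (c : ℕ) (a b : ℤ) : ℂ :=
  ∑ x ∈ (Finset.Icc 1 c).filter (fun x => Nat.Coprime x c),
    (jacobiSym (x : ℤ) c : ℂ) *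
      eC (((a * x + b * (invMod c x) : ℤ) : ℂ) / (c : ℂ))

/-- `T(c; a, ρ)`. -/
def Tchar (c : ℕ) (a : ℤ) (ρ : ℕ) : ℂ :=
  ∑ x ∈ (Finset.Icc 1 c).filter (fun x => Nat.Coprime x c),
    (jacobiSym (x : ℤ) c : ℂ) ^ ρ * eC (((a * x : ℤ) : ℂ) / (c : ℂ))

/-!
Write `x = u + p v` with `u < p` and `v < p ^ (α - 1)`. The Jacobi symbol
`(x / p ^ α) = (u / p) ^ α` depends only on `u`, so `S(p ^ α; a, 0)` factors into a sum over `u`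
times a complete geometric sum over `v`, which vanishes unless `p ^ (α - 1) ∣ a`. For
`a = p ^ (α - 1) a₀` what is left is `p ^ (α - 1) · ∑ u, (u / p) ^ α e(a₀ u / p)`. If `p ∣ a₀`
this inner sum is trivially at most `p`; otherwise it is the Gauss sum of `χ ^ α` for the quadratic
character `χ` mod `p`, whose squared absolute value is `1` for even `α` (where `χ ^ α` is trivial)
and `p` for odd `α`.
-/

open Finset

lemma eC_natCast_mul (n : ℕ) (t : ℂ) : eC (n * t) = eC t ^ n := by
  rw [eC, eC, ← Complex.exp_nat_mul]
  ring_nf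

lemma eC_eq_one_iff {t : ℂ} : eC t = 1 ↔ ∃ n : ℤ, t = n := by
  rw [eC, Complex.exp_eq_one_iff]
  have h : (2 * Real.pi * Complex.I : ℂ) ≠ 0 := by simp [Real.pi_ne_zero]
  constructor
  · rintro ⟨n, hn⟩
    exact ⟨n, mul_left_cancel₀ h (by rw [hn]; ring)⟩
  · rintro ⟨n, rfl⟩
    exact ⟨n, by ring⟩

lemma eC_intCast_div_eq_one_iff (a : ℤ) {q : ℕ} (hq : q ≠ 0) :
    eC (a / q) = 1 ↔ (q : ℤ) ∣ a := by
  have hq' : (q : ℂ) ≠ 0 := by exact_mod_cast hq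
  rw [eC_eq_one_iff]
  constructor
  · rintro ⟨n, hn⟩
    refine ⟨n, ?_⟩
    rw [div_eq_iff hq'] at hn
    exact_mod_cast hn.trans (mul_comm _ _)
  · rintro ⟨n, rfl⟩
    exact ⟨n, by push_cast; field_simp⟩

lemma eC_intCast_div_pow_self (a : ℤ) {q : ℕ} (hq : q ≠ 0) : eC (a / q) ^ q = 1 := by
  rw [← eC_natCast_mul, eC_eq_one_iff]
  exact ⟨a, by field_simp⟩

lemma sum_range_eC_intCast_div_pow (a : ℤ) {q : ℕ} (hq : q ≠ 0) :
    ∑ v ∈ range q, eC (a / q) ^ v = if (q : ℤ) ∣ a then (q : ℂ) else 0 := by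
  split_ifs with h
  · simp [(eC_intCast_div_eq_one_iff a hq).2 h]
  · rw [geom_sum_eq ((eC_intCast_div_eq_one_iff a hq).not.2 h), eC_intCast_div_pow_self a hq,
      sub_self, zero_div]

lemma isPrimitiveRoot_eC_intCast_div {p : ℕ} (hp : p.Prime) {a : ℤ} (ha : ¬ (p : ℤ) ∣ a) :
    IsPrimitiveRoot (eC (a / p)) p := by
  have := Fact.mk hp
  rw [IsPrimitiveRoot.iff_orderOf]
  exact orderOf_eq_prime (eC_intCast_div_pow_self a hp.ne_zero)
    ((eC_intCast_div_eq_one_iff a hp.ne_zero).not.2 ha)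

lemma sum_range_mul_mul_pow_of_periodic {R : Type*} [CommSemiring R] {f : ℕ → R} {m : ℕ}
    (hf : Function.Periodic f m) (n : ℕ) (z : R) :
    ∑ x ∈ range (m * n), f x * z ^ x =
      (∑ u ∈ range m, f u * z ^ u) * ∑ v ∈ range n, (z ^ m) ^ v := by
  induction n with
  | zero => simp
  | succ n ih =>
    have hshift : ∀ u, f (m * n + u) * z ^ (m * n + u) = f u * z ^ u * (z ^ m) ^ n := by
      intro u
      have hfu : f (u + n * m) = f u := by simpa using hf.nat_mul n u
      rw [add_comm, mul_comm m n, hfu, pow_add, pow_mul]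
      ring
    rw [mul_add_one, sum_range_add, ih, sum_range_succ, mul_add]
    simp only [hshift, ← sum_mul]

lemma salieSum_zero_eq_sum_range {q : ℕ} (hq : 1 < q) (a : ℤ) :
    salieSum q a 0 = ∑ x ∈ range q, (jacobiSym x q : ℂ) * eC (a / q) ^ x := by
  have : NeZero q := ⟨by omega⟩
  have hunits :
      (Icc 1 q).filter (fun x => x.Coprime q) = (range q).filter (fun x => x.Coprime q) := by
    ext x
    simp only [mem_filter, mem_Icc, mem_range]
    constructor
    · rintro ⟨⟨-, hxq⟩, hx⟩
      refine ⟨lt_of_le_of_ne hxq ?_, hx⟩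
      rintro rfl
      exact hq.ne' ((Nat.coprime_self _).1 hx)
    · rintro ⟨hxq, hx⟩
      refine ⟨⟨Nat.pos_of_ne_zero ?_, hxq.le⟩, hx⟩
      rintro rfl
      exact hq.ne' (Nat.coprime_zero_left _ |>.1 hx)
  rw [salieSum, hunits, sum_filter_of_ne]
  · refine sum_congr rfl fun x _ => ?_
    rw [zero_mul, add_zero, ← eC_natCast_mul]
    push_cast
    ring_nf
  · intro x _ hx
    by_contra hcop
    apply hx
    rw [jacobiSym.eq_zero_iff_not_coprime.2 (by simpa [Int.gcd_natCast_natCast] using hcop)]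
    simp

lemma jacobiSym_natCast_periodic (p : ℕ) : Function.Periodic (fun x : ℕ => jacobiSym x p) p :=
  fun x => jacobiSym.mod_left' (by push_cast; exact Int.add_emod_right _ _)

lemma salieSum_prime_pow_zero_eq {p : ℕ} (hp : p.Prime) (m : ℕ) (a : ℤ) :
    salieSum (p ^ (m + 1)) a 0 =
      (∑ u ∈ range p, (jacobiSym u p : ℂ) ^ (m + 1) * eC (a / (p ^ (m + 1) : ℕ)) ^ u) *
        ∑ v ∈ range (p ^ m), eC (a / (p ^ m : ℕ)) ^ v := by
  have hperiodic : Function.Periodic (fun x : ℕ => (jacobiSym x p : ℂ) ^ (m + 1)) p :=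
    fun x => by simp only [jacobiSym_natCast_periodic p x]
  have hpow : eC (a / (p ^ (m + 1) : ℕ)) ^ p = eC (a / (p ^ m : ℕ)) := by
    rw [← eC_natCast_mul]
    congr 1
    push_cast
    field_simp [hp.ne_zero]
    ring
  rw [salieSum_zero_eq_sum_range (Nat.one_lt_pow m.succ_ne_zero hp.one_lt), ← hpow,
    ← sum_range_mul_mul_pow_of_periodic hperiodic, ← pow_succ']
  simp only [jacobiSym.pow_right, Int.cast_pow]

lemma norm_gaussSum_pow_sq_le {F : Type*} [Field F] [Fintype F] {χ : MulChar F ℂ} (hχ : χ ≠ 1)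
    (hχq : χ.IsQuadratic) {ψ : AddChar F ℂ} (hψ : ψ.IsPrimitive) (n : ℕ) :
    ‖gaussSum (χ ^ n) ψ‖ ^ 2 ≤ Fintype.card F := by
  rcases Nat.even_or_odd n with hn | hn
  · have hψ1 : ψ ≠ 1 := by simpa using hψ one_ne_zero
    rw [hχq.pow_even hn, gaussSum_one_left hψ1, norm_neg, norm_one, one_pow]
    exact_mod_cast Fintype.card_pos
  · rw [hχq.pow_odd hn, ← norm_pow, gaussSum_sq hχ hχq hψ, norm_mul, Complex.norm_natCast]
    have hχ1 : ‖χ (-1)‖ ≤ 1 := by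
      rcases hχq (-1) with h | h | h <;> simp [h]
    exact mul_le_of_le_one_left (Nat.cast_nonneg _) hχ1

lemma sum_range_eq_sum_zmod {M : Type*} [AddCommMonoid M] (n : ℕ) [NeZero n] (g : ZMod n → M) :
    ∑ u ∈ range n, g u = ∑ x : ZMod n, g x :=
  sum_nbij' (fun u => (u : ZMod n)) ZMod.val (fun _ _ => mem_univ _)
    (fun x _ => mem_range.2 (ZMod.val_lt x)) (fun _ hu => ZMod.val_cast_of_lt (mem_range.1 hu))
    (fun x _ => ZMod.natCast_zmod_val x) (fun _ _ => rfl)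

lemma sum_range_jacobiSym_pow_mul_pow_eq_gaussSum {p : ℕ} [Fact p.Prime] {n : ℕ} (hn : n ≠ 0)
    {w : ℂ} (hw : w ^ p = 1) :
    ∑ u ∈ range p, (jacobiSym u p : ℂ) ^ n * w ^ u =
      gaussSum ((quadraticChar (ZMod p)).ringHomComp (Int.castRingHom ℂ) ^ n)
        (AddChar.zmodChar p hw) := by
  rw [gaussSum, ← sum_range_eq_sum_zmod]
  refine sum_congr rfl fun u _ => ?_
  rw [MulChar.pow_apply' _ hn, AddChar.zmodChar_apply', MulChar.ringHomComp_apply,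
    ← jacobiSym.legendreSym.to_jacobiSym, legendreSym, Int.cast_natCast]
  rfl

lemma norm_sq_sum_range_jacobiSym_pow_mul_eC_le {p : ℕ} (hp : p.Prime) (hp2 : p ≠ 2) {n : ℕ}
    (hn : n ≠ 0) {a : ℤ} (ha : ¬ (p : ℤ) ∣ a) :
    ‖∑ u ∈ range p, (jacobiSym u p : ℂ) ^ n * eC (a / p) ^ u‖ ^ 2 ≤ p := by
  have := Fact.mk hp
  have hχ : (quadraticChar (ZMod p)).ringHomComp (Int.castRingHom ℂ) ≠ 1 := by
    rw [Ne, MulChar.ringHomComp_eq_one_iff Int.cast_injective]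
    exact quadraticChar_ne_one (by rwa [ZMod.ringChar_zmod_n])
  rw [sum_range_jacobiSym_pow_mul_pow_eq_gaussSum hn (eC_intCast_div_pow_self a hp.ne_zero)]
  simpa using norm_gaussSum_pow_sq_le hχ ((quadraticChar_isQuadratic _).comp _)
    (AddChar.zmodChar_primitive_of_primitive_root p (isPrimitiveRoot_eC_intCast_div hp ha)) n

lemma norm_sum_range_jacobiSym_pow_mul_pow_le (p n : ℕ) {w : ℂ} (hw : ‖w‖ ≤ 1) :
    ‖∑ u ∈ range p, (jacobiSym u p : ℂ) ^ n * w ^ u‖ ≤ p := by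
  refine (norm_sum_le _ _).trans ?_
  have hterm : ∀ u ∈ range p, ‖(jacobiSym u p : ℂ) ^ n * w ^ u‖ ≤ 1 := by
    intro u _
    have hJ : ‖(jacobiSym u p : ℂ)‖ ≤ 1 := by
      rcases jacobiSym.trichotomy u p with h | h | h <;> simp [h]
    rw [norm_mul, norm_pow, norm_pow]
    exact mul_le_one₀ (pow_le_one₀ (norm_nonneg _) hJ) (by positivity)
      (pow_le_one₀ (norm_nonneg _) hw)
  simpa using sum_le_sum hterm

lemma salieSum_prime_pow_zero_of_not_dvd {p : ℕ} (hp : p.Prime) {m : ℕ} {a : ℤ}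
    (ha : ¬ (p : ℤ) ^ m ∣ a) : salieSum (p ^ (m + 1)) a 0 = 0 := by
  rw [salieSum_prime_pow_zero_eq hp, sum_range_eC_intCast_div_pow a (pow_ne_zero m hp.ne_zero),
    if_neg (by exact_mod_cast ha), mul_zero]

lemma salieSum_prime_pow_zero_mul {p : ℕ} (hp : p.Prime) (m : ℕ) (a : ℤ) :
    salieSum (p ^ (m + 1)) (p ^ m * a) 0 =
      p ^ m * ∑ u ∈ range p, (jacobiSym u p : ℂ) ^ (m + 1) * eC (a / p) ^ u := by
  have hζ : eC (((p ^ m * a : ℤ) : ℂ) / (p ^ (m + 1) : ℕ)) = eC (a / p) := by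
    congr 1
    push_cast
    field_simp [hp.ne_zero]
    ring
  rw [salieSum_prime_pow_zero_eq hp, hζ,
    sum_range_eC_intCast_div_pow _ (pow_ne_zero m hp.ne_zero), if_pos (by push_cast; simp)]
  push_cast
  ring

lemma le_intGcd_of_dvd {d : ℕ} {x y : ℤ} (hx : x ≠ 0) (hdx : (d : ℤ) ∣ x) (hdy : (d : ℤ) ∣ y) :
    d ≤ Int.gcd x y :=
  Nat.le_of_dvd (Int.gcd_pos_of_ne_zero_left y hx)
    (Int.natCast_dvd_natCast.1 (Int.dvd_coe_gcd hdx hdy))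

lemma norm_sq_salieSum_prime_pow_zero_le {p : ℕ} (hp : p.Prime) (hp2 : p ≠ 2) (m : ℕ) (a : ℤ) :
    ‖salieSum (p ^ (m + 1)) a 0‖ ^ 2 ≤ (p : ℝ) ^ (m + 1) * Int.gcd ((p : ℤ) ^ (m + 1)) a := by
  by_cases ha : (p : ℤ) ^ m ∣ a
  swap
  · rw [salieSum_prime_pow_zero_of_not_dvd hp ha, norm_zero, sq, zero_mul]
    positivity
  obtain ⟨a₀, rfl⟩ := ha
  have hgcd : ∀ k ≤ m + 1, (p : ℤ) ^ k ∣ p ^ m * a₀ →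
      (p : ℝ) ^ k ≤ Int.gcd ((p : ℤ) ^ (m + 1)) (p ^ m * a₀) := fun k hk hdvd => by
    have := le_intGcd_of_dvd (d := p ^ k) (pow_ne_zero (m + 1) (Int.natCast_ne_zero.2 hp.ne_zero))
      (by push_cast; exact pow_dvd_pow _ hk) (by push_cast; exact hdvd)
    exact_mod_cast this
  rw [salieSum_prime_pow_zero_mul hp, norm_mul, mul_pow, norm_pow, Complex.norm_natCast]
  set G := ∑ u ∈ range p, (jacobiSym u p : ℂ) ^ (m + 1) * eC (a₀ / p) ^ u
  by_cases hpa : (p : ℤ) ∣ a₀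
  · have hG : ‖G‖ ≤ p := norm_sum_range_jacobiSym_pow_mul_pow_le p (m + 1)
      (by rw [(eC_intCast_div_eq_one_iff a₀ hp.ne_zero).2 hpa, norm_one])
    have hg := hgcd (m + 1) le_rfl (by rw [pow_succ]; exact mul_dvd_mul_left _ hpa)
    calc ((p : ℝ) ^ m) ^ 2 * ‖G‖ ^ 2 ≤ ((p : ℝ) ^ m) ^ 2 * (p : ℝ) ^ 2 := by gcongr
      _ = (p : ℝ) ^ (m + 1) * (p : ℝ) ^ (m + 1) := by ring
      _ ≤ _ := by gcongr
  · have hG := norm_sq_sum_range_jacobiSym_pow_mul_eC_le hp hp2 m.succ_ne_zero hpa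
    have hg := hgcd m m.le_succ (dvd_mul_right _ _)
    calc ((p : ℝ) ^ m) ^ 2 * ‖G‖ ^ 2 ≤ ((p : ℝ) ^ m) ^ 2 * p := by gcongr
      _ = (p : ℝ) ^ (m + 1) * (p : ℝ) ^ m := by ring
      _ ≤ _ := by gcongr

lemma le_rpow_half_mul_rpow_half_of_sq_le {s x y : ℝ} {n : ℕ} (hs : 0 ≤ s) (hx : 0 ≤ x)
    (h : s ^ 2 ≤ x ^ n * y) : s ≤ x ^ ((n : ℝ) / 2) * y ^ ((1 : ℝ) / 2) :=
  calc s = √(s ^ 2) := (Real.sqrt_sq hs).symm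
    _ ≤ √(x ^ n * y) := Real.sqrt_le_sqrt h
    _ = x ^ ((n : ℝ) / 2) * y ^ ((1 : ℝ) / 2) := by
      rw [Real.sqrt_mul (pow_nonneg hx n), Real.sqrt_eq_rpow, Real.sqrt_eq_rpow,
        ← Real.rpow_natCast, ← Real.rpow_mul hx]
      ring_nf

/-- Lemma 2.4: `|S(p^α; a, 0)| ≤ p^{α/2} (p^α, a)^{1/2}`. -/
theorem salieSum_zero_bound (p : ℕ) (hp : p.Prime) (hodd : Odd p) (α : ℕ) (hα : 0 < α)
    (a : ℤ) :
    ‖salieSum (p ^ α) a 0‖ ≤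
      (p : ℝ) ^ ((α : ℝ) / 2) * (Int.gcd ((p : ℤ) ^ α) a : ℝ) ^ ((1 : ℝ) / 2) := by
  obtain ⟨m, rfl⟩ : ∃ m, α = m + 1 := ⟨α - 1, by omega⟩
  have hp2 : p ≠ 2 := by rintro rfl; exact Nat.not_odd_iff_even.2 even_two hodd
  exact le_rpow_half_mul_rpow_half_of_sq_le (norm_nonneg _) p.cast_nonneg
    (norm_sq_salieSum_prime_pow_zero_le hp hp2 m a)

end
end

section
/- Let k be a fixed integer. For every ε > 0 there is a constant C > 0 (depending on k, ε) such that for all integers H ≥ 2 and all positive integers q with q ≤ 3H² + |k|: D(H, q, k) ≤ C · q^{−1} · H^{3+ε}. -/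
open scoped Classical
open Complex

noncomputable section

/-!
The values `s = x² + y² + z²` lie in `[3, 3H²]` and in a single residue class modulo `q`, so
there are at most `3H²/q + 1 ≪ H²/q` of them. Given `s` and `x`, the pair `(y, z)` represents
`s - x²` as a sum of two squares, and `r₂(M) ≤ d(M)² ≪ M^ε`: after dividing out `gcd(y, z)`, a
primitive representation `N = y² + z²` gives the square root `z/y` of `-1` modulo `N`, and by the
Chinese remainder theorem there are at most `d(N)` of those, because modulo a prime power `-1` has
at most two square roots.
-/

open Finset

theorem add_one_le_mul_pow {a : ℝ} (ha : 1 < a) (e : ℕ) :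
    (e + 1 : ℝ) ≤ (1 + (a - 1)⁻¹) * a ^ e := by
  have hbern : 1 + e * (a - 1) ≤ a ^ e := by
    simpa using one_add_mul_le_pow (a := a - 1) (by linarith) e
  have hK : 1 ≤ (1 + (a - 1)⁻¹) * (a - 1) := by
    rw [add_mul, inv_mul_cancel₀ (by linarith)]; linarith
  have hK1 : (1 : ℝ) ≤ 1 + (a - 1)⁻¹ := by
    have : 0 < (a - 1)⁻¹ := inv_pos.2 (by linarith); linarith
  calc (e + 1 : ℝ) ≤ (1 + (a - 1)⁻¹) * (1 + e * (a - 1)) := by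
        nlinarith [(e.cast_nonneg : (0 : ℝ) ≤ e)]
    _ ≤ (1 + (a - 1)⁻¹) * a ^ e := by gcongr

theorem Nat.card_divisors_le_mul_rpow {ε : ℝ} (hε : 0 < ε) :
    ∃ C : ℝ, 0 < C ∧ ∀ n : ℕ, (#n.divisors : ℝ) ≤ C * (n : ℝ) ^ ε := by
  set K : ℝ := 1 + ((2 : ℝ) ^ ε - 1)⁻¹
  have h2ε : 1 < (2 : ℝ) ^ ε := Real.one_lt_rpow (by norm_num) hε
  have hK : 1 ≤ K := le_add_of_nonneg_right (inv_nonneg.2 (by linarith))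
  set B : ℕ := ⌈(2 : ℝ) ^ ε⁻¹⌉₊
  -- small primes cost a factor `K` each; for `p ≥ 2 ^ (1/ε)` we have `p ^ ε ≥ 2`
  have hfactor : ∀ p e : ℕ, 2 ≤ p →
      (e + 1 : ℝ) ≤ (if p < B then K else 1) * ((p : ℝ) ^ e) ^ ε := by
    intro p e hp
    have hp' : (2 : ℝ) ≤ p := by exact_mod_cast hp
    have hcomm : ((p : ℝ) ^ e) ^ ε = ((p : ℝ) ^ ε) ^ e := by
      rw [← Real.rpow_natCast, ← Real.rpow_natCast, ← Real.rpow_mul (by positivity),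
        ← Real.rpow_mul (by positivity), mul_comm]
    rw [hcomm]
    split_ifs with hpB
    · calc (e + 1 : ℝ) ≤ K * ((2 : ℝ) ^ ε) ^ e := add_one_le_mul_pow h2ε e
        _ ≤ K * ((p : ℝ) ^ ε) ^ e := by gcongr
    · have hpε : 2 ≤ (p : ℝ) ^ ε := by
        have hBp : (2 : ℝ) ^ ε⁻¹ ≤ p := (Nat.le_ceil _).trans (by exact_mod_cast not_lt.1 hpB)
        calc (2 : ℝ) = ((2 : ℝ) ^ ε⁻¹) ^ ε := by
                rw [← Real.rpow_mul (by norm_num), inv_mul_cancel₀ hε.ne', Real.rpow_one]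
          _ ≤ (p : ℝ) ^ ε := by gcongr
      calc (e + 1 : ℝ) ≤ 2 ^ e := by exact_mod_cast Nat.lt_two_pow_self
        _ ≤ 1 * ((p : ℝ) ^ ε) ^ e := by rw [one_mul]; gcongr
  refine ⟨K ^ B, by positivity, fun n => ?_⟩
  rcases eq_or_ne n 0 with rfl | hn
  · simp [Real.zero_rpow hε.ne']
  have hsmall : ∏ p ∈ n.primeFactors, (if p < B then K else 1) ≤ K ^ B := by
    rw [prod_ite, prod_const, prod_const_one, mul_one]
    refine pow_le_pow_right₀ hK ((card_le_card fun p hp => ?_).trans (card_range B).le)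
    exact mem_range.2 (mem_filter.1 hp).2
  calc (#n.divisors : ℝ) = ∏ p ∈ n.primeFactors, (n.factorization p + 1 : ℝ) := by
        rw [Nat.card_divisors hn]; push_cast; rfl
    _ ≤ ∏ p ∈ n.primeFactors, ((if p < B then K else 1) * ((p : ℝ) ^ n.factorization p) ^ ε) :=
        prod_le_prod (fun _ _ => by positivity)
          fun p hp => hfactor p _ (Nat.prime_of_mem_primeFactors hp).two_le
    _ = (∏ p ∈ n.primeFactors, (if p < B then K else 1)) * (n : ℝ) ^ ε := by
        rw [prod_mul_distrib, Real.finsetProd_rpow _ _ (fun _ _ => by positivity)]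
        congr 2
        exact_mod_cast (Nat.prod_primeFactors_pow_factorization hn).symm
    _ ≤ K ^ B * (n : ℝ) ^ ε := by gcongr

namespace ZMod

theorem isUnit_or_isUnit_of_isUnit_add {p e : ℕ} (hp : p.Prime) {a b : ZMod (p ^ e)}
    (h : IsUnit (a + b)) : IsUnit a ∨ IsUnit b := by
  rcases Nat.eq_zero_or_pos e with rfl | he
  · exact Or.inl (@isUnit_of_subsingleton (ZMod 1) _ _ a)
  have : NeZero (p ^ e) := ⟨pow_ne_zero _ hp.ne_zero⟩
  rw [← natCast_zmod_val a, ← natCast_zmod_val b] at h ⊢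
  rw [← Nat.cast_add, isUnit_natCast_iff_not_dvd_pow hp he] at h
  simp only [isUnit_natCast_iff_not_dvd_pow hp he]
  by_contra! hab
  exact h (dvd_add hab.1 hab.2)

theorem eq_or_eq_neg_of_sq_eq_neg_one {p e : ℕ} (hp : p.Prime) {x y : ZMod (p ^ e)}
    (hx : x ^ 2 = -1) (hy : y ^ 2 = -1) : x = y ∨ x = -y := by
  rcases hp.eq_two_or_odd' with rfl | hodd
  · rcases Nat.lt_or_ge e 2 with he | he
    · interval_cases e <;> revert x y <;> decide
    · -- `-1` is not a square modulo `4`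
      have h4 : 4 ∣ 2 ^ e := (by norm_num : 4 ∣ 2 ^ 2).trans (pow_dvd_pow 2 he)
      have := congrArg (castHom h4 (ZMod 4)) hx
      rw [map_pow, map_neg, map_one] at this
      exact absurd this (by generalize castHom h4 (ZMod 4) x = z; revert z; decide)
  · -- `(x - y) + (x + y) = 2x` is a unit, so one of the factors of `(x - y)(x + y) = 0` is a unit
    have hxu : IsUnit x := IsUnit.of_mul_eq_one (-x) (by linear_combination -hx)
    have h2u : IsUnit (2 : ZMod (p ^ e)) := by
      exact_mod_cast (isUnit_iff_coprime 2 (p ^ e)).2 ((Nat.coprime_two_left.2 hodd).pow_right e)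
    have hprod : (x - y) * (x + y) = 0 := by linear_combination hx - hy
    rcases isUnit_or_isUnit_of_isUnit_add hp (a := x - y) (b := x + y)
      (by rw [show x - y + (x + y) = 2 * x by ring]; exact h2u.mul hxu) with hu | hu
    · exact Or.inr (eq_neg_of_add_eq_zero_left ((hu.mul_right_eq_zero).1 hprod))
    · exact Or.inl (sub_eq_zero.1 ((hu.mul_left_eq_zero).1 hprod))

theorem card_sq_eq_neg_one_prime_pow_le {p e : ℕ} (hp : p.Prime) :
    Nat.card {x : ZMod (p ^ e) // x ^ 2 = -1} ≤ 2 := by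
  rcases isEmpty_or_nonempty {x : ZMod (p ^ e) // x ^ 2 = -1} with h | ⟨x₀, hx₀⟩
  · simp
  -- every root is `x₀` or `-x₀`, so `x ↦ (x = x₀)` is injective
  calc Nat.card {x : ZMod (p ^ e) // x ^ 2 = -1} ≤ Nat.card Bool :=
        Nat.card_le_card_of_injective (fun x => decide (x.1 = x₀)) fun x y hxy =>
          Subtype.ext <| by
            rcases eq_or_eq_neg_of_sq_eq_neg_one hp x.2 hx₀ with hx | hx <;>
            rcases eq_or_eq_neg_of_sq_eq_neg_one hp y.2 hx₀ with hy | hy <;>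
            simp_all
    _ = 2 := by simp

theorem card_sq_eq_neg_one_mul {m n : ℕ} (h : m.Coprime n) :
    Nat.card {x : ZMod (m * n) // x ^ 2 = -1} =
      Nat.card {x : ZMod m // x ^ 2 = -1} * Nat.card {x : ZMod n // x ^ 2 = -1} := by
  let e := chineseRemainder h
  have he : ∀ x : ZMod (m * n), x ^ 2 = -1 ↔ (e x).1 ^ 2 = -1 ∧ (e x).2 ^ 2 = -1 := fun x => by
    rw [← e.injective.eq_iff, map_pow, map_neg, map_one, Prod.ext_iff]; rfl
  rw [Nat.card_congr (e.toEquiv.subtypeEquiv (q := fun y => y.1 ^ 2 = -1 ∧ y.2 ^ 2 = -1) he),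
    Nat.card_congr (Equiv.subtypeProdEquivProd (p := fun u : ZMod m => u ^ 2 = -1)
      (q := fun u : ZMod n => u ^ 2 = -1)), Nat.card_prod]

theorem card_sq_eq_neg_one_le_card_divisors (N : ℕ) :
    Nat.card {x : ZMod N // x ^ 2 = -1} ≤ #N.divisors := by
  induction N using Nat.recOnPosPrimePosCoprime with
  | prime_pow p e hp he =>
    rw [Nat.divisors_prime_pow hp, card_map, card_range]
    exact (card_sq_eq_neg_one_prime_pow_le hp).trans (by omega)
  | zero =>
    have hℤ : ∀ x : ℤ, x ^ 2 ≠ -1 := fun x hx => by nlinarith [sq_nonneg x]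
    have : IsEmpty {x : ZMod 0 // x ^ 2 = -1} := ⟨fun x => hℤ x.1 x.2⟩
    simp
  | one => exact (Nat.card_le_card_of_injective _ Subtype.val_injective).trans (by simp)
  | coprime a b _ _ hab iha ihb =>
    rw [card_sq_eq_neg_one_mul hab, Nat.Coprime.card_divisors_mul hab]
    exact Nat.mul_le_mul iha ihb

end ZMod

def sqAddSqReps (M : ℕ) : Finset (ℕ × ℕ) := {p ∈ Icc 1 M ×ˢ Icc 1 M | p.1 ^ 2 + p.2 ^ 2 = M}

theorem mem_sqAddSqReps {M : ℕ} {p : ℕ × ℕ} :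
    p ∈ sqAddSqReps M ↔ 0 < p.1 ∧ 0 < p.2 ∧ p.1 ^ 2 + p.2 ^ 2 = M := by
  simp only [sqAddSqReps, mem_filter, mem_product, mem_Icc]
  constructor
  · rintro ⟨⟨⟨h1, -⟩, h2, -⟩, h⟩
    exact ⟨h1, h2, h⟩
  · rintro ⟨h1, h2, h⟩
    have := Nat.le_self_pow two_ne_zero p.1
    have := Nat.le_self_pow two_ne_zero p.2
    exact ⟨⟨⟨h1, by omega⟩, h2, by omega⟩, h⟩

theorem Nat.Coprime.coprime_sq_add_sq {y z : ℕ} (h : y.Coprime z) : y.Coprime (y ^ 2 + z ^ 2) := by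
  rw [add_comm, sq y, Nat.coprime_add_mul_left_right]
  exact h.pow_right 2

theorem card_coprime_sqAddSqReps_le (N : ℕ) :
    #{p ∈ sqAddSqReps N | p.1.Coprime p.2} ≤ Nat.card {x : ZMod N // x ^ 2 = -1} := by
  rcases eq_or_ne N 0 with rfl | hN
  · simp [sqAddSqReps]
  have : NeZero N := ⟨hN⟩
  set s := {p ∈ sqAddSqReps N | p.1.Coprime p.2}
  have hmem : ∀ p ∈ s, (0 < p.1 ∧ 0 < p.2 ∧ p.1 ^ 2 + p.2 ^ 2 = N) ∧ p.1.Coprime p.2 :=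
    fun p hp => by simpa only [s, mem_filter, mem_sqAddSqReps] using hp
  have hinv : ∀ p ∈ s, (p.1 : ZMod N) * (p.1 : ZMod N)⁻¹ = 1 := fun p hp => by
    obtain ⟨⟨-, -, hN⟩, hcop⟩ := hmem p hp
    exact ZMod.coe_mul_inv_eq_one _ (hN ▸ hcop.coprime_sq_add_sq)
  have hsum : ∀ p ∈ s, (p.1 : ZMod N) ^ 2 + (p.2 : ZMod N) ^ 2 = 0 := fun p hp => by
    rw [← Nat.cast_pow, ← Nat.cast_pow, ← Nat.cast_add, (hmem p hp).1.2.2, ZMod.natCast_self]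
  -- a coprime representation `N = y² + z²` gives the square root `z / y` of `-1` modulo `N`
  let root (p : s) : {x : ZMod N // x ^ 2 = -1} :=
    ⟨(p.1.2 : ZMod N) * (p.1.1 : ZMod N)⁻¹, by
      linear_combination (p.1.1 : ZMod N)⁻¹ ^ 2 * hsum p.1 p.2 -
        ((p.1.1 : ZMod N) * (p.1.1 : ZMod N)⁻¹ + 1) * hinv p.1 p.2⟩
  have hroot : Function.Injective root := by
    rintro ⟨⟨y, z⟩, hp⟩ ⟨⟨y', z'⟩, hp'⟩ heq
    obtain ⟨⟨hy, hz, hN⟩, hcop⟩ := hmem _ hp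
    obtain ⟨⟨hy', hz', hN'⟩, hcop'⟩ := hmem _ hp'
    dsimp only at hy hz hN hcop hy' hz' hN' hcop'
    have hcross : ((z * y' : ℕ) : ZMod N) = ((z' * y : ℕ) : ZMod N) := by
      push_cast
      linear_combination (y : ZMod N) * y' * congrArg Subtype.val heq -
        z * y' * hinv _ hp + z' * y * hinv _ hp'
    -- both products lie in `(0, N)`, so the congruence is an equality
    have hlt : z * y' < N ∧ z' * y < N := by constructor <;> nlinarith
    have hzy : z * y' = z' * y := by
      have := congrArg ZMod.val hcross
      rwa [ZMod.val_cast_of_lt hlt.1, ZMod.val_cast_of_lt hlt.2] at this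
    have hyy : y = y' := Nat.dvd_antisymm
      (hcop.dvd_of_dvd_mul_left ⟨z', by rw [hzy, mul_comm]⟩)
      (hcop'.dvd_of_dvd_mul_left ⟨z, by rw [← hzy, mul_comm]⟩)
    subst hyy
    obtain rfl : z = z' := Nat.eq_of_mul_eq_mul_right hy hzy
    rfl
  calc #s = Nat.card s := (Nat.card_eq_finsetCard s).symm
    _ ≤ _ := Nat.card_le_card_of_injective root hroot

theorem card_filter_gcd_eq_le (M g : ℕ) :
    #{p ∈ sqAddSqReps M | Nat.gcd p.1 p.2 = g} ≤
      #{p ∈ sqAddSqReps (M / g ^ 2) | p.1.Coprime p.2} := by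
  refine card_le_card_of_injOn (fun p => (p.1 / g, p.2 / g)) (fun p hp => ?_)
    (fun p hp p' hp' h => ?_)
  · simp only [coe_filter, mem_sqAddSqReps, Set.mem_ofPred_eq] at hp ⊢
    obtain ⟨⟨hy, hz, hM⟩, hg⟩ := hp
    have hcop := Nat.coprime_div_gcd_div_gcd (Nat.gcd_pos_of_pos_left p.2 hy)
    obtain ⟨a, ha⟩ := Nat.gcd_dvd_left p.1 p.2
    obtain ⟨b, hb⟩ := Nat.gcd_dvd_right p.1 p.2
    rw [hg] at ha hb hcop
    have hg0 : 0 < g := hg ▸ Nat.gcd_pos_of_pos_left p.2 hy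
    rw [ha, hb, Nat.mul_div_cancel_left _ hg0, Nat.mul_div_cancel_left _ hg0] at hcop ⊢
    refine ⟨⟨Nat.pos_of_mul_pos_left (ha ▸ hy), Nat.pos_of_mul_pos_left (hb ▸ hz), ?_⟩, hcop⟩
    rw [← hM, ha, hb, mul_pow, mul_pow, ← mul_add, Nat.mul_div_cancel_left _ (by positivity)]
  · simp only [coe_filter, mem_sqAddSqReps, Set.mem_ofPred_eq] at hp hp'
    obtain ⟨h1, h2⟩ := Prod.mk.inj h
    have hdvd {q : ℕ × ℕ} (hq : q.1.gcd q.2 = g) : g ∣ q.1 ∧ g ∣ q.2 :=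
      hq ▸ ⟨Nat.gcd_dvd_left _ _, Nat.gcd_dvd_right _ _⟩
    obtain ⟨hy, hz⟩ := hdvd hp.2
    obtain ⟨hy', hz'⟩ := hdvd hp'.2
    exact Prod.ext (by rw [← Nat.mul_div_cancel' hy, h1, Nat.mul_div_cancel' hy'])
      (by rw [← Nat.mul_div_cancel' hz, h2, Nat.mul_div_cancel' hz'])

theorem card_sqAddSqReps_le (M : ℕ) : #(sqAddSqReps M) ≤ #M.divisors ^ 2 := by
  rcases eq_or_ne M 0 with rfl | hM
  · simp [sqAddSqReps]
  have hgcd {p : ℕ × ℕ} (hp : p ∈ sqAddSqReps M) : Nat.gcd p.1 p.2 ^ 2 ∣ M := by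
    rw [← (mem_sqAddSqReps.1 hp).2.2]
    exact dvd_add (pow_dvd_pow_of_dvd (Nat.gcd_dvd_left _ _) 2)
      (pow_dvd_pow_of_dvd (Nat.gcd_dvd_right _ _) 2)
  have himage : (sqAddSqReps M).image (fun p => Nat.gcd p.1 p.2) ⊆ M.divisors := by
    intro g hg
    obtain ⟨p, hp, rfl⟩ := mem_image.1 hg
    exact Nat.mem_divisors.2 ⟨(dvd_pow_self _ two_ne_zero).trans (hgcd hp), hM⟩
  have hfiber : ∀ g ∈ (sqAddSqReps M).image (fun p => Nat.gcd p.1 p.2),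
      #{p ∈ sqAddSqReps M | Nat.gcd p.1 p.2 = g} ≤ #M.divisors := by
    intro g hg
    obtain ⟨p, hp, rfl⟩ := mem_image.1 hg
    calc _ ≤ #{p ∈ sqAddSqReps (M / Nat.gcd p.1 p.2 ^ 2) | p.1.Coprime p.2} :=
          card_filter_gcd_eq_le _ _
      _ ≤ Nat.card {x : ZMod (M / Nat.gcd p.1 p.2 ^ 2) // x ^ 2 = -1} :=
          card_coprime_sqAddSqReps_le _
      _ ≤ #(M / Nat.gcd p.1 p.2 ^ 2).divisors := ZMod.card_sq_eq_neg_one_le_card_divisors _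
      _ ≤ #M.divisors :=
          card_le_card (Nat.divisors_subset_of_dvd hM (Nat.div_dvd_of_dvd (hgcd hp)))
  calc #(sqAddSqReps M) ≤ #M.divisors * #((sqAddSqReps M).image fun p => Nat.gcd p.1 p.2) :=
        card_le_mul_card_image _ _ hfiber
    _ ≤ #M.divisors ^ 2 := by rw [sq]; exact Nat.mul_le_mul_left _ (card_le_card himage)

theorem card_sqAddSqReps_le_mul_rpow {ε : ℝ} (hε : 0 < ε) :
    ∃ C : ℝ, 0 < C ∧ ∀ M : ℕ, (#(sqAddSqReps M) : ℝ) ≤ C * (M : ℝ) ^ ε := by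
  obtain ⟨C, hC, hd⟩ := Nat.card_divisors_le_mul_rpow (half_pos hε)
  refine ⟨C ^ 2, by positivity, fun M => ?_⟩
  calc (#(sqAddSqReps M) : ℝ) ≤ (#M.divisors : ℝ) ^ 2 := by exact_mod_cast card_sqAddSqReps_le M
    _ ≤ (C * (M : ℝ) ^ (ε / 2)) ^ 2 := by gcongr; exact hd M
    _ = C ^ 2 * (M : ℝ) ^ ε := by
        rw [mul_pow, ← Real.rpow_mul_natCast (by positivity)]; norm_num

theorem card_filter_dvd_add_le (L q : ℕ) (k : ℤ) :
    #((range (L + 1)).filter fun n : ℕ => (q : ℤ) ∣ n + k) ≤ L / q + 1 := by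
  rw [← card_range (L / q + 1)]
  refine card_le_card_of_injOn (· / q) (fun n hn => ?_) (fun m hm n hn h => ?_)
  · simp only [coe_filter, mem_range, Set.mem_ofPred_eq, coe_range, Set.mem_Iio] at hn ⊢
    exact Nat.lt_succ_of_le (Nat.div_le_div_right (Nat.le_of_lt_succ hn.1))
  · simp only [coe_filter, Set.mem_ofPred_eq] at hm hn
    have hmod : m ≡ n [MOD q] := Nat.modEq_iff_dvd.2 (by simpa using dvd_sub hn.2 hm.2)
    rw [← Nat.div_add_mod m q, ← Nat.div_add_mod n q, hmod]
    exact congrArg (q * · + n % q) h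

theorem Finset.cast_card_le_card_image_mul {α β : Type*} [DecidableEq β] (s : Finset α)
    (f : α → β) {B : ℝ} (h : ∀ b ∈ s.image f, (#{a ∈ s | f a = b} : ℝ) ≤ B) :
    (#s : ℝ) ≤ #(s.image f) * B := by
  rw [card_eq_sum_card_image f s, Nat.cast_sum]
  exact (sum_le_sum h).trans_eq (by rw [sum_const, nsmul_eq_mul])

theorem Dcount_le_mul (H q : ℕ) (k : ℤ) {R : ℝ}
    (hR : ∀ M ≤ 3 * H ^ 2, (#(sqAddSqReps M) : ℝ) ≤ R) :
    (Dcount H q k : ℝ) ≤ H * (3 * H ^ 2 / q + 1 : ℕ) * R := by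
  set S := (Icc 1 H ×ˢ Icc 1 H ×ˢ Icc 1 H).filter
    (fun t => (q : ℤ) ∣ ((t.1 : ℤ) ^ 2 + (t.2.1 : ℤ) ^ 2 + (t.2.2 : ℤ) ^ 2 + k))
  have hS {t : ℕ × ℕ × ℕ} (ht : t ∈ S) : ((1 ≤ t.1 ∧ t.1 ≤ H) ∧ (1 ≤ t.2.1 ∧ t.2.1 ≤ H) ∧
      (1 ≤ t.2.2 ∧ t.2.2 ≤ H)) ∧ (q : ℤ) ∣ ((t.1 ^ 2 + t.2.1 ^ 2 + t.2.2 ^ 2 : ℕ) : ℤ) + k := by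
    simpa only [S, mem_filter, mem_product, mem_Icc, Nat.cast_add, Nat.cast_pow] using ht
  set V := (range (3 * H ^ 2 + 1)).filter (fun n : ℕ => (q : ℤ) ∣ n + k)
  -- a triple is determined by `x` and the value `x² + y² + z²`, up to a representation of `y² + z²`
  let f (t : ℕ × ℕ × ℕ) : ℕ × ℕ := (t.1, t.1 ^ 2 + t.2.1 ^ 2 + t.2.2 ^ 2)
  have hbound {t : ℕ × ℕ × ℕ} (ht : t ∈ S) : t.1 ^ 2 + t.2.1 ^ 2 + t.2.2 ^ 2 ≤ 3 * H ^ 2 := by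
    obtain ⟨⟨⟨-, h1⟩, ⟨-, h2⟩, ⟨-, h3⟩⟩, -⟩ := hS ht
    have := Nat.pow_le_pow_left h1 2
    have := Nat.pow_le_pow_left h2 2
    have := Nat.pow_le_pow_left h3 2
    omega
  have himage : S.image f ⊆ Icc 1 H ×ˢ V := by
    intro b hb
    obtain ⟨t, ht, rfl⟩ := mem_image.1 hb
    obtain ⟨⟨hx, -, -⟩, hq⟩ := hS ht
    exact mem_product.2
      ⟨mem_Icc.2 hx, mem_filter.2 ⟨mem_range.2 (Nat.lt_succ_of_le (hbound ht)), hq⟩⟩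
  have hfiber : ∀ b ∈ S.image f, (#{t ∈ S | f t = b} : ℝ) ≤ R := by
    intro b hb
    obtain ⟨t₀, ht₀, rfl⟩ := mem_image.1 hb
    refine le_trans ?_
      (hR (t₀.1 ^ 2 + t₀.2.1 ^ 2 + t₀.2.2 ^ 2 - t₀.1 ^ 2) (by have := hbound ht₀; omega))
    refine Nat.cast_le.2 (card_le_card_of_injOn Prod.snd (fun t ht => ?_) fun t ht t' ht' h => ?_)
    · simp only [coe_filter, Set.mem_ofPred_eq, Prod.mk.injEq, f] at ht
      obtain ⟨⟨-, hy, hz⟩, -⟩ := hS ht.1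
      obtain ⟨-, hx, hsum⟩ := ht
      rw [mem_coe, mem_sqAddSqReps]
      refine ⟨hy.1, hz.1, ?_⟩
      rw [← hsum, hx]
      omega
    · simp only [coe_filter, Set.mem_ofPred_eq, Prod.mk.injEq, f] at ht ht'
      exact Prod.ext (ht.2.1.trans ht'.2.1.symm) h
  have hR0 : 0 ≤ R := (Nat.cast_nonneg _).trans (hR 0 (Nat.zero_le _))
  calc (Dcount H q k : ℝ) = #S := rfl
    _ ≤ #(S.image f) * R := cast_card_le_card_image_mul S f hfiber
    _ ≤ H * (3 * H ^ 2 / q + 1 : ℕ) * R := by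
        gcongr
        calc (#(S.image f) : ℝ) ≤ #(Icc 1 H ×ˢ V) := by exact_mod_cast card_le_card himage
          _ ≤ H * (3 * H ^ 2 / q + 1 : ℕ) := by
              rw [card_product, Nat.card_Icc, Nat.add_sub_cancel, Nat.cast_mul]
              gcongr
              exact_mod_cast card_filter_dvd_add_le _ q k

/-- Lemma 3.1, bound for `D(H,q,k)`: `D(H,q,k) ≪ q⁻¹ H^{3+ε}` for `q ≪ H²`. -/
theorem Dcount_bound (k : ℤ) :
    ∀ ε : ℝ, 0 < ε → ∃ C : ℝ, 0 < C ∧ ∀ H q : ℕ, 2 ≤ H → 0 < q →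
      (q : ℤ) ≤ 3 * (H : ℤ) ^ 2 + |k| →
        (Dcount H q k : ℝ) ≤ C * (q : ℝ)⁻¹ * (H : ℝ) ^ ((3 : ℝ) + ε) := by
  intro ε hε
  obtain ⟨C, hC, hreps⟩ := card_sqAddSqReps_le_mul_rpow (half_pos hε)
  refine ⟨(6 + |(k : ℝ)|) * 3 ^ (ε / 2) * C, by positivity, fun H q hH hq hqH => ?_⟩
  have hH : (1 : ℝ) ≤ H := by exact_mod_cast (by omega : 1 ≤ H)
  have hq : (0 : ℝ) < q := by exact_mod_cast hq
  have hqH : (q : ℝ) ≤ 3 * H ^ 2 + |(k : ℝ)| := by exact_mod_cast hqH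
  have hvalues : ((3 * H ^ 2 / q + 1 : ℕ) : ℝ) ≤ (6 + |(k : ℝ)|) * H ^ 2 / q := by
    rw [le_div_iff₀ hq]
    have := Nat.cast_div_le (m := 3 * H ^ 2) (n := q) (α := ℝ)
    push_cast at this ⊢
    rw [le_div_iff₀ hq] at this
    have hk : |(k : ℝ)| ≤ |(k : ℝ)| * H ^ 2 :=
      le_mul_of_one_le_right (abs_nonneg _) (one_le_pow₀ hH)
    linarith
  have hpow : ((3 : ℝ) * H ^ 2) ^ (ε / 2) = 3 ^ (ε / 2) * H ^ ε := by
    rw [Real.mul_rpow (by norm_num) (by positivity), ← Real.rpow_natCast_mul (by positivity),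
      Nat.cast_ofNat, mul_div_cancel₀ _ two_ne_zero]
  calc (Dcount H q k : ℝ) ≤ H * (3 * H ^ 2 / q + 1 : ℕ) * (C * (3 * H ^ 2) ^ (ε / 2)) :=
        Dcount_le_mul H q k fun M hM =>
          (hreps M).trans (by gcongr; exact_mod_cast hM)
    _ ≤ H * ((6 + |(k : ℝ)|) * H ^ 2 / q) * (C * (3 ^ (ε / 2) * H ^ ε)) := by
        rw [hpow]; gcongr
    _ = (6 + |(k : ℝ)|) * 3 ^ (ε / 2) * C * (q : ℝ)⁻¹ * (H : ℝ) ^ ((3 : ℝ) + ε) := by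
        rw [Real.rpow_add (by positivity), Real.rpow_ofNat]
        field_simp
end
end
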